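/- arXiv:2003.04971 — 5 statements merged into one kernel-verified Lean document; each statement's English description precedes it below -/
import Mathlib

section
/- Assume additionally that B_U is a relatively open convex subset of an affine subspace u* + U_L ⊆ U with U_L a closed linear subspace, that K : B_Z × B_U → W is Fréchet differentiable, and that the derivative DK : B_Z × B_U → L(Z × U_L, W) is Lipschitz continuous. Then the derivative Dz : B_U → L(U_L, Z) of the solution map u ↦ z(u) is Lipschitz continuous. -/
open Asymptotics Topology

/-- **Lipschitz continuity of the derivative of the fixed point (Theorem 3.5 b), second part).**
In the setting of the parametric fixed point theorem, assume in addition that `B_U` is a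
relatively open convex subset of the affine subspace `u₀ + U_L` (with `U_L ⊆ U` a closed linear
subspace), that `K` is Fréchet differentiable on `B_Z × B_U` and that the derivative
`DK : B_Z × B_U → L(Z × U_L, W)` is Lipschitz continuous. Then the derivative
`Dz : B_U → L(U_L, Z)` of the solution map `u ↦ z(u)` is Lipschitz continuous. -/
theorem stmt_2
    {U W Z : Type*}
    [NormedAddCommGroup U] [NormedSpace ℝ U] [CompleteSpace U]
    [NormedAddCommGroup W] [NormedSpace ℝ W] [CompleteSpace W]
    [NormedAddCommGroup Z] [NormedSpace ℝ Z] [CompleteSpace Z]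
    (A : Z ≃L[ℝ] W)
    (B_Z : Set Z) (B_U : Set U)
    (hBZclosed : IsClosed B_Z) (hBZconv : Convex ℝ B_Z) (hBZne : B_Z.Nonempty)
    (hBUne : B_U.Nonempty)
    (K : Z → U → W) (L_z L_u : ℝ) (hLz : 0 ≤ L_z) (hLu : 0 ≤ L_u)
    (hKlip : ∀ z ∈ B_Z, ∀ u ∈ B_U, ∀ z' ∈ B_Z, ∀ u' ∈ B_U,
      ‖K z u - K z' u'‖ ≤ L_z * ‖z - z'‖ + L_u * ‖u - u'‖)
    (hinv : ∀ z ∈ B_Z, ∀ u ∈ B_U, A.symm (K z u) ∈ B_Z)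
    (hcontr : ‖(A.symm : W →L[ℝ] Z)‖ * L_z < 1)
    -- `B_U` is a relatively open convex subset of `u₀ + U_L`, `U_L` a closed subspace:
    (u₀ : U) (U_L : Submodule ℝ U) (hUL : IsClosed (U_L : Set U))
    (hBUaff : ∀ u ∈ B_U, u - u₀ ∈ U_L)
    (hBUconv : Convex ℝ B_U)
    (hBUopen : ∀ u ∈ B_U, ∃ ε > 0, ∀ d ∈ U_L, ‖d‖ < ε → u + d ∈ B_U)
    -- `K` is Fréchet differentiable on `B_Z × B_U` with partial derivatives `DzK`, `DuK`:
    (DzK : Z → U → (Z →L[ℝ] W)) (DuK : Z → U → (U →L[ℝ] W))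
    (hKdiff : ∀ z ∈ B_Z, ∀ u ∈ B_U,
      (fun p : Z × U => K p.1 p.2 - K z u - DzK z u (p.1 - z) - DuK z u (p.2 - u))
        =o[𝓝[B_Z ×ˢ B_U] (z, u)] fun p : Z × U => ‖p.1 - z‖ + ‖p.2 - u‖)
    (hDzKbound : ∀ z ∈ B_Z, ∀ u ∈ B_U, ∀ w : Z, ‖DzK z u w‖ ≤ L_z * ‖w‖)
    (hDuKbound : ∀ z ∈ B_Z, ∀ u ∈ B_U, ∀ d ∈ U_L, ‖DuK z u d‖ ≤ L_u * ‖d‖)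
    -- `DK` is Lipschitz continuous on `B_Z × B_U` (as a map into `L(Z × U_L, W)`):
    (L_D : ℝ)
    (hDKlip : ∀ z ∈ B_Z, ∀ u ∈ B_U, ∀ z' ∈ B_Z, ∀ u' ∈ B_U, ∀ (dz : Z), ∀ d ∈ U_L,
      ‖(DzK z u dz + DuK z u d) - (DzK z' u' dz + DuK z' u' d)‖ ≤
        L_D * (‖z - z'‖ + ‖u - u'‖) * (‖dz‖ + ‖d‖))
    -- `sol` is the solution map `u ↦ z(u)` of `A z = K(z,u)` and `Dsol` its derivative:
    (sol : U → Z)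
    (hsol : ∀ u ∈ B_U, sol u ∈ B_Z ∧ A (sol u) = K (sol u) u)
    (Dsol : U → (U_L →L[ℝ] Z))
    (hDsol_eq : ∀ u ∈ B_U, ∀ d : U_L,
      A (Dsol u d) = DzK (sol u) u (Dsol u d) + DuK (sol u) u (d : U))
    (hDsol_diff : ∀ u ∈ B_U,
      (fun d : U_L => sol (u + (d : U)) - sol u - Dsol u d)
        =o[𝓝[{d : U_L | u + (d : U) ∈ B_U}] 0] fun d : U_L => ‖d‖) :
    ∃ C : ℝ, 0 ≤ C ∧ ∀ u ∈ B_U, ∀ u' ∈ B_U, ‖Dsol u - Dsol u'‖ ≤ C * ‖u - u'‖ := by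

  set M := ‖(A.symm : W →L[ℝ] Z)‖ with hM
  have hM0 : 0 ≤ M := norm_nonneg _
  have h1 : 0 < 1 - M * L_z := by linarith
  have hAsymm : ∀ w : W, ‖A.symm w‖ ≤ M * ‖w‖ :=
    fun w => (A.symm : W →L[ℝ] Z).le_opNorm w
  set C₁ := M * L_u / (1 - M * L_z) with hC₁
  have hC₁0 : 0 ≤ C₁ := by positivity
  -- sol is Lipschitz
  have hsolLip : ∀ u ∈ B_U, ∀ u' ∈ B_U, ‖sol u - sol u'‖ ≤ C₁ * ‖u - u'‖ := by
    intro u hu u' hu'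
    have hz := (hsol u hu).1
    have hz' := (hsol u' hu').1
    have key : ‖sol u - sol u'‖ ≤ M * (L_z * ‖sol u - sol u'‖ + L_u * ‖u - u'‖) := by
      have e1 : sol u - sol u' = A.symm (A (sol u - sol u')) := by simp
      have e2 : A (sol u - sol u') = K (sol u) u - K (sol u') u' := by
        rw [map_sub, (hsol u hu).2, (hsol u' hu').2]
      calc ‖sol u - sol u'‖ = ‖A.symm (A (sol u - sol u'))‖ := by rw [← e1]
        _ ≤ M * ‖A (sol u - sol u')‖ := hAsymm _
        _ ≤ M * (L_z * ‖sol u - sol u'‖ + L_u * ‖u - u'‖) := by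
            rw [e2]
            exact mul_le_mul_of_nonneg_left
              (hKlip _ hz _ hu _ hz' _ hu') hM0
    rw [hC₁, div_mul_eq_mul_div, le_div_iff₀ h1]
    nlinarith [key]
  -- bound on Dsol
  have hDsolBd : ∀ u ∈ B_U, ∀ d : U_L, ‖Dsol u d‖ ≤ C₁ * ‖(d : U)‖ := by
    intro u hu d
    have hz := (hsol u hu).1
    have key : ‖Dsol u d‖ ≤ M * (L_z * ‖Dsol u d‖ + L_u * ‖(d : U)‖) := by
      calc ‖Dsol u d‖ = ‖A.symm (A (Dsol u d))‖ := by simp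
        _ ≤ M * ‖A (Dsol u d)‖ := hAsymm _
        _ ≤ M * (L_z * ‖Dsol u d‖ + L_u * ‖(d : U)‖) := by
            rw [hDsol_eq u hu d]
            refine mul_le_mul_of_nonneg_left ?_ hM0
            calc ‖DzK (sol u) u (Dsol u d) + DuK (sol u) u (d : U)‖
                ≤ ‖DzK (sol u) u (Dsol u d)‖ + ‖DuK (sol u) u (d : U)‖ := norm_add_le _ _
              _ ≤ L_z * ‖Dsol u d‖ + L_u * ‖(d : U)‖ :=
                  add_le_add (hDzKbound _ hz _ hu _) (hDuKbound _ hz _ hu _ d.2)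
    rw [hC₁, div_mul_eq_mul_div, le_div_iff₀ h1]
    nlinarith [key]
  set L_D' := max L_D 0 with hLD'
  have hLD'0 : 0 ≤ L_D' := le_max_right _ _
  refine ⟨M * L_D' * (C₁ + 1) ^ 2 / (1 - M * L_z), by positivity, ?_⟩
  intro u hu u' hu'
  have hz := (hsol u hu).1
  have hz' := (hsol u' hu').1
  refine ContinuousLinearMap.opNorm_le_bound _ (by positivity) ?_
  intro d
  have hdnorm : ‖d‖ = ‖(d : U)‖ := rfl
  rw [ContinuousLinearMap.sub_apply, hdnorm]
  set e := Dsol u d - Dsol u' d with he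
  set R := (DzK (sol u) u (Dsol u' d) + DuK (sol u) u (d : U))
      - (DzK (sol u') u' (Dsol u' d) + DuK (sol u') u' (d : U)) with hR
  have hAe : A e = DzK (sol u) u e + R := by
    rw [he, map_sub, hDsol_eq u hu d, hDsol_eq u' hu' d, hR, map_sub]
    abel
  have hRbd : ‖R‖ ≤ L_D' * ((C₁ + 1) * ‖u - u'‖) * ((C₁ + 1) * ‖(d : U)‖) := by
    have h0 : ‖R‖ ≤ L_D * (‖sol u - sol u'‖ + ‖u - u'‖) * (‖Dsol u' d‖ + ‖(d : U)‖) :=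
      hDKlip _ hz _ hu _ hz' _ hu' (Dsol u' d) (d : U) d.2
    have h1a : ‖sol u - sol u'‖ + ‖u - u'‖ ≤ (C₁ + 1) * ‖u - u'‖ := by
      have := hsolLip u hu u' hu'
      nlinarith [norm_nonneg (u - u')]
    have h1b : ‖Dsol u' d‖ + ‖(d : U)‖ ≤ (C₁ + 1) * ‖(d : U)‖ := by
      have := hDsolBd u' hu' d
      nlinarith [norm_nonneg ((d : U))]
    have hLD : L_D ≤ L_D' := le_max_left _ _
    calc ‖R‖ ≤ L_D * (‖sol u - sol u'‖ + ‖u - u'‖) * (‖Dsol u' d‖ + ‖(d : U)‖) := h0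
      _ ≤ L_D' * (‖sol u - sol u'‖ + ‖u - u'‖) * (‖Dsol u' d‖ + ‖(d : U)‖) := by
          gcongr
      _ ≤ L_D' * ((C₁ + 1) * ‖u - u'‖) * ((C₁ + 1) * ‖(d : U)‖) := by
          gcongr
  have key : ‖e‖ ≤ M * (L_z * ‖e‖ + ‖R‖) := by
    calc ‖e‖ = ‖A.symm (A e)‖ := by simp
      _ ≤ M * ‖A e‖ := hAsymm _
      _ ≤ M * (L_z * ‖e‖ + ‖R‖) := by
          rw [hAe]
          refine mul_le_mul_of_nonneg_left ?_ hM0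
          calc ‖DzK (sol u) u e + R‖ ≤ ‖DzK (sol u) u e‖ + ‖R‖ := norm_add_le _ _
            _ ≤ L_z * ‖e‖ + ‖R‖ := by
                have := hDzKbound _ hz _ hu e
                linarith
  have : (1 - M * L_z) * ‖e‖ ≤ M * ‖R‖ := by nlinarith [key]
  rw [div_mul_eq_mul_div, div_mul_eq_mul_div, le_div_iff₀ h1]
  calc ‖e‖ * (1 - M * L_z) = (1 - M * L_z) * ‖e‖ := by ring
    _ ≤ M * ‖R‖ := this
    _ ≤ M * (L_D' * ((C₁ + 1) * ‖u - u'‖) * ((C₁ + 1) * ‖(d : U)‖)) :=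
        mul_le_mul_of_nonneg_left hRbd hM0
    _ = M * L_D' * (C₁ + 1) ^ 2 * ‖u - u'‖ * ‖(d : U)‖ := by ring
end

section
/- Let h : ℝⁿ → ℝ be continuously differentiable and let ψ ∈ C¹_c(ℝ^{n+1}; ℝ^{n+1}) be a continuously differentiable vector field with compact support. Then ∫_{{(x,y) ∈ ℝⁿ×ℝ : y < h(x)}} div ψ(x,y) d(x,y) = ∫_{ℝⁿ} ψ(x, h(x))ᵀ (−∇h(x), 1) dx, i.e. the integral of the divergence of ψ over the open subgraph of h equals the integral over ℝⁿ of the inner product of ψ evaluated on the graph of h with the (non-normalized) upward normal vector (−∇h(x), 1) ∈ ℝ^{n+1}. -/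
/-!
The shear `(x, y) ↦ (x, y + h x)` preserves Lebesgue measure and maps the lower half-space
`{y < 0}` onto the subgraph of `h`. Pulling `φ` back to `f = φ ∘ shear`, the chain rule gives
`Dφ (shear p) v = ∂_{(v₁, 0)} f p + (v₂ - Dh(x) v₁) • ∂_y f p`. Over the half-space the horizontal
derivative integrates to zero (integrate in `x` first), while the vertical one integrates in `y`
to the boundary value `f (x, 0) = φ (x, h x)`. Applied to the components of `ψ` and summed, this is
the divergence formula, because `∑ᵢ ∂ᵢh x * (ψ q).1 i = ⟪(ψ q).1, ∇h x⟫`.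
-/

open MeasureTheory
open scoped RealInnerProductSpace

open Set

theorem HasCompactSupport.comp_leftInverse {X Y M : Type*} [TopologicalSpace X]
    [TopologicalSpace Y] [T2Space Y] [Zero M] {f : X → M} (hf : HasCompactSupport f)
    {g : Y → X} {r : X → Y} (hr : Continuous r) (hrg : Function.LeftInverse r g) :
    HasCompactSupport (f ∘ g) := by
  refine HasCompactSupport.intro (hf.image hr) fun y hy => ?_
  by_contra hne
  exact hy ⟨g y, subset_tsupport f hne, hrg y⟩

section Shear

variable {X : Type*} [TopologicalSpace X]

def shear (h : X → ℝ) (hh : Continuous h) : X × ℝ ≃ₜ X × ℝ :=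
  { (Equiv.refl X).prodShear fun x => Equiv.addRight (h x) with
    continuous_toFun := continuous_fst.prodMk (continuous_snd.add (hh.comp continuous_fst))
    continuous_invFun := continuous_fst.prodMk (continuous_snd.sub (hh.comp continuous_fst)) }

variable {h : X → ℝ}

theorem coe_shear (hh : Continuous h) : ⇑(shear h hh) = fun p => (p.1, p.2 + h p.1) := rfl

theorem preimage_shear_subgraph (hh : Continuous h) :
    shear h hh ⁻¹' {q | q.2 < h q.1} = {p | p.2 < 0} := by
  ext p
  simp [coe_shear]

variable [MeasureSpace X] [SFinite (volume : Measure X)]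

theorem measurePreserving_shear [OpensMeasurableSpace X] (hh : Continuous h) :
    MeasurePreserving (shear h hh) volume volume := by
  rw [Measure.volume_eq_prod]
  exact (MeasurePreserving.id volume).skew_product
    (measurable_snd.add (hh.measurable.comp measurable_fst))
    (.of_forall fun x => map_add_right_eq_self volume (h x))

theorem setIntegral_subgraph_eq_setIntegral_shear [BorelSpace X] {F : Type*}
    [NormedAddCommGroup F] [NormedSpace ℝ F] (hh : Continuous h) (G : X × ℝ → F) :
    ∫ q in {q : X × ℝ | q.2 < h q.1}, G q = ∫ p in {p : X × ℝ | p.2 < 0}, G (shear h hh p) := by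
  rw [← (measurePreserving_shear hh).setIntegral_preimage_emb (shear h hh).measurableEmbedding,
    preimage_shear_subgraph]

end Shear

theorem restrict_lowerHalfSpace {X : Type*} [MeasureSpace X] [SFinite (volume : Measure X)] :
    (volume : Measure (X × ℝ)).restrict {p | p.2 < 0} = volume.prod (volume.restrict (Iio 0)) := by
  rw [show {p : X × ℝ | p.2 < 0} = univ ×ˢ Iio 0 by ext; simp, Measure.volume_eq_prod,
    ← Measure.prod_restrict, Measure.restrict_univ]

section Integrability

variable {E F : Type*} [NormedAddCommGroup E] [NormedSpace ℝ E] [MeasurableSpace E]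
  [OpensMeasurableSpace E] {μ : Measure E} [IsFiniteMeasureOnCompacts μ]
  [NormedAddCommGroup F] [NormedSpace ℝ F] {f : E → F}

theorem ContDiff.integrable_fderiv_apply (hf : ContDiff ℝ 1 f) (hfc : HasCompactSupport f)
    (v : E) : Integrable (fun x => fderiv ℝ f x v) μ :=
  ((hf.continuous_fderiv one_ne_zero).clm_apply continuous_const).integrable_of_hasCompactSupport
    (hfc.fderiv_apply ℝ v)

theorem ContDiff.integrable_smul_fderiv_apply (hf : ContDiff ℝ 1 f) (hfc : HasCompactSupport f)
    {c : E → ℝ} (hc : Continuous c) (v : E) : Integrable (fun x => c x • fderiv ℝ f x v) μ :=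
  (hc.smul ((hf.continuous_fderiv one_ne_zero).clm_apply
    continuous_const)).integrable_of_hasCompactSupport (hfc.fderiv_apply ℝ v).smul_left

end Integrability

theorem integral_fderiv_apply_eq_zero {E F : Type*} [NormedAddCommGroup E] [NormedSpace ℝ E]
    [FiniteDimensional ℝ E] [MeasurableSpace E] [BorelSpace E] {μ : Measure E}
    [μ.IsAddHaarMeasure] [NormedAddCommGroup F] [NormedSpace ℝ F] {f : E → F}
    (hf : ContDiff ℝ 1 f) (hfc : HasCompactSupport f) (v : E) :
    ∫ x, fderiv ℝ f x v ∂μ = 0 := by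
  simpa using integral_smul_fderiv_eq_neg_fderiv_smul_of_integrable (μ := μ)
    (f := fun _ => (1 : ℝ)) (g := f) (v := v) (by simp)
    (by simpa using hf.integrable_fderiv_apply hfc v)
    (by simpa using hf.continuous.integrable_of_hasCompactSupport hfc)
    (fun x _ => differentiableAt_const _) (fun x _ => hf.differentiable one_ne_zero x)

theorem fderiv_apply_shear {E F : Type*} [NormedAddCommGroup E] [NormedSpace ℝ E]
    [NormedAddCommGroup F] [NormedSpace ℝ F] {h : E → ℝ} (hh : Continuous h) {φ : E × ℝ → F}
    {p : E × ℝ} (hφ : DifferentiableAt ℝ φ (shear h hh p)) (hhp : DifferentiableAt ℝ h p.1)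
    (v : E × ℝ) :
    fderiv ℝ φ (shear h hh p) v = fderiv ℝ (φ ∘ shear h hh) p (v.1, 0)
      + (v.2 - fderiv ℝ h p.1 v.1) • fderiv ℝ (φ ∘ shear h hh) p (0, 1) := by
  have hT : HasFDerivAt (shear h hh) ((ContinuousLinearMap.fst ℝ E ℝ).prod
      (.snd ℝ E ℝ + (fderiv ℝ h p.1).comp (.fst ℝ E ℝ))) p :=
    hasFDerivAt_fst.prodMk (hasFDerivAt_snd.add (hhp.hasFDerivAt.comp p hasFDerivAt_fst))
  rw [(hφ.hasFDerivAt.comp p hT).fderiv]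
  simp only [ContinuousLinearMap.comp_apply, ContinuousLinearMap.prod_apply,
    add_apply, ContinuousLinearMap.coe_fst', ContinuousLinearMap.coe_snd',
    map_zero, add_zero, zero_add, ← map_smul, ← map_add]
  congr 1
  ext <;> simp

section Subgraph

variable {E F : Type*} [NormedAddCommGroup E] [NormedSpace ℝ E] [FiniteDimensional ℝ E]
  [MeasureSpace E] [BorelSpace E] [(volume : Measure E).IsAddHaarMeasure]
  [NormedAddCommGroup F] [NormedSpace ℝ F] {f : E × ℝ → F}

theorem integral_lowerHalfSpace_fderiv_apply_horizontal (hf : ContDiff ℝ 1 f)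
    (hfc : HasCompactSupport f) (w : E) :
    ∫ p in {p : E × ℝ | p.2 < 0}, fderiv ℝ f p (w, 0) = 0 := by
  have hint := (hf.integrable_fderiv_apply (μ := volume) hfc (w, 0)).integrableOn
    (s := {p | p.2 < 0})
  rw [IntegrableOn, restrict_lowerHalfSpace] at hint
  rw [restrict_lowerHalfSpace, integral_prod_symm _ hint]
  have hslice : ∀ y, ∫ x, fderiv ℝ f (x, y) (w, 0) = 0 := fun y => by
    have hfy : ContDiff ℝ 1 (fun x => f (x, y)) := hf.comp (contDiff_id.prodMk contDiff_const)
    rw [← integral_fderiv_apply_eq_zero (μ := volume) hfy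
      (hfc.comp_leftInverse continuous_fst fun _ => rfl) w]
    congr with x
    have hd : HasFDerivAt (fun x => f (x, y)) ((fderiv ℝ f (x, y)).comp (.inl ℝ E ℝ)) x :=
      (hf.differentiable one_ne_zero _).hasFDerivAt.comp x (hasFDerivAt_prodMk_left x y)
    rw [hd.fderiv]
    rfl
  simp [hslice]

variable [CompleteSpace F]

theorem integral_lowerHalfSpace_smul_fderiv_apply_vertical (hf : ContDiff ℝ 1 f)
    (hfc : HasCompactSupport f) {a : E → ℝ} (ha : Continuous a) :
    ∫ p in {p : E × ℝ | p.2 < 0}, a p.1 • fderiv ℝ f p (0, 1) = ∫ x, a x • f (x, 0) := by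
  have hint := (hf.integrable_smul_fderiv_apply (μ := volume) hfc (c := fun p => a p.1)
    (ha.comp continuous_fst) (0, 1)).integrableOn (s := {p | p.2 < 0})
  rw [IntegrableOn, restrict_lowerHalfSpace] at hint
  rw [restrict_lowerHalfSpace, integral_prod _ hint]
  congr with x
  have hfx : ContDiff ℝ 1 (fun y => f (x, y)) := hf.comp (contDiff_const.prodMk contDiff_id)
  have hderiv : ∀ y, deriv (fun y => f (x, y)) y = fderiv ℝ f (x, y) (0, 1) := fun y =>
    ((hf.differentiable one_ne_zero _).hasFDerivAt.comp_hasDerivAt y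
      ((hasDerivAt_const y x).prodMk (hasDerivAt_id y))).deriv
  dsimp only
  rw [integral_smul, ← integral_Iic_eq_integral_Iio, ← funext hderiv,
    (hfc.comp_leftInverse continuous_snd fun _ => rfl).integral_Iic_deriv_eq hfx]

theorem integral_subgraph_fderiv_apply {h : E → ℝ} (hh : ContDiff ℝ 1 h) {φ : E × ℝ → F}
    (hφ : ContDiff ℝ 1 φ) (hφc : HasCompactSupport φ) (v : E × ℝ) :
    ∫ q in {q : E × ℝ | q.2 < h q.1}, fderiv ℝ φ q v
      = ∫ x, (v.2 - fderiv ℝ h x v.1) • φ (x, h x) := by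
  set T := shear h hh.continuous
  set f := φ ∘ T
  have hf : ContDiff ℝ 1 f :=
    hφ.comp (contDiff_fst.prodMk (contDiff_snd.add (hh.comp contDiff_fst)))
  have hfc : HasCompactSupport f := hφc.comp_homeomorph T
  have ha : Continuous fun x => v.2 - fderiv ℝ h x v.1 :=
    continuous_const.sub ((hh.continuous_fderiv one_ne_zero).clm_apply continuous_const)
  calc ∫ q in {q : E × ℝ | q.2 < h q.1}, fderiv ℝ φ q v
      = ∫ p in {p : E × ℝ | p.2 < 0}, fderiv ℝ φ (T p) v :=
        setIntegral_subgraph_eq_setIntegral_shear _ _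
    _ = ∫ p in {p : E × ℝ | p.2 < 0}, (fderiv ℝ f p (v.1, 0)
          + (v.2 - fderiv ℝ h p.1 v.1) • fderiv ℝ f p (0, 1)) := by
        congr with p
        exact fderiv_apply_shear _ (hφ.differentiable one_ne_zero _)
          (hh.differentiable one_ne_zero _) v
    _ = ∫ x, (v.2 - fderiv ℝ h x v.1) • f (x, 0) := by
        rw [integral_add (hf.integrable_fderiv_apply hfc _).integrableOn
          (hf.integrable_smul_fderiv_apply hfc
            (c := fun p => v.2 - fderiv ℝ h p.1 v.1) (ha.comp continuous_fst) _).integrableOn,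
          integral_lowerHalfSpace_fderiv_apply_horizontal hf hfc,
          integral_lowerHalfSpace_smul_fderiv_apply_vertical hf hfc ha, zero_add]
    _ = ∫ x, (v.2 - fderiv ℝ h x v.1) • φ (x, h x) := by
        simp [f, T, coe_shear]

end Subgraph

theorem EuclideanSpace.gradient_apply {ι : Type*} [Fintype ι] [DecidableEq ι]
    (f : EuclideanSpace ℝ ι → ℝ) (x : EuclideanSpace ℝ ι) (i : ι) :
    gradient f x i = fderiv ℝ f x (EuclideanSpace.single i 1) := by
  simpa using (EuclideanSpace.inner_single_left i (1 : ℝ) (gradient f x)).symm.trans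
    (inner_gradient_right (𝕜 := ℝ))

theorem integral_sum_apply_fst_add_snd {α ι : Type*} [Fintype ι] [MeasurableSpace α]
    {μ : Measure α} {G : ι → α → EuclideanSpace ℝ ι × ℝ} {H : α → EuclideanSpace ℝ ι × ℝ}
    (hG : ∀ i, Integrable (G i) μ) (hH : Integrable H μ) :
    ∫ a, (∑ i, (G i a).1 i + (H a).2) ∂μ = ∑ i, (∫ a, G i a ∂μ).1 i + (∫ a, H a ∂μ).2 := by
  have hGi : ∀ i, Integrable (fun a => (G i a).1 i) μ := fun i => (hG i).fst.eval_piLp i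
  rw [integral_add (integrable_finsetSum _ fun i _ => hGi i) hH.snd,
    integral_finsetSum _ fun i _ => hGi i, snd_integral hH]
  congr 1
  refine Finset.sum_congr rfl fun i _ => ?_
  rw [fst_integral (hG i), eval_integral_piLp (hG i).fst.eval_piLp]

/-- **Divergence theorem on the subgraph (Lemma 3.13 / `lem:normal`).**
For `h : ℝⁿ → ℝ` continuously differentiable and `ψ ∈ C¹_c(ℝ^{n+1}; ℝ^{n+1})`,
the integral of `div ψ` over the open subgraph `{(x,y) : y < h(x)}` equals
`∫_{ℝⁿ} ψ(x, h(x))ᵀ (−∇h(x), 1) dx`. Points of `ℝ^{n+1}` are modeled as pairs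
`(x, y) ∈ EuclideanSpace ℝ (Fin n) × ℝ` and the divergence is written as the sum of the
directional derivatives in the standard basis directions. -/
theorem stmt_5 (n : ℕ) (h : EuclideanSpace ℝ (Fin n) → ℝ) (hh : ContDiff ℝ 1 h)
    (ψ : EuclideanSpace ℝ (Fin n) × ℝ → EuclideanSpace ℝ (Fin n) × ℝ)
    (hψ : ContDiff ℝ 1 ψ) (hψc : HasCompactSupport ψ) :
    (∫ p in {q : EuclideanSpace ℝ (Fin n) × ℝ | q.2 < h q.1},
        ((∑ i : Fin n, (fderiv ℝ ψ p (EuclideanSpace.single i 1, (0 : ℝ))).1 i)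
          + (fderiv ℝ ψ p ((0 : EuclideanSpace ℝ (Fin n)), (1 : ℝ))).2))
      = ∫ x, (⟪(ψ (x, h x)).1, -gradient h x⟫ + (ψ (x, h x)).2) := by
  have hbulk : ∀ v, Integrable (fun q => fderiv ℝ ψ q v)
      (volume.restrict {q : EuclideanSpace ℝ (Fin n) × ℝ | q.2 < h q.1}) := fun v =>
    (hψ.integrable_fderiv_apply hψc v).integrableOn
  have hbdry : ∀ v : EuclideanSpace ℝ (Fin n) × ℝ,
      Integrable (fun x => (v.2 - fderiv ℝ h x v.1) • ψ (x, h x)) := fun v =>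
    ((continuous_const.sub ((hh.continuous_fderiv one_ne_zero).clm_apply continuous_const)).smul
      (hψ.continuous.comp (continuous_id.prodMk hh.continuous))).integrable_of_hasCompactSupport
      (hψc.comp_leftInverse continuous_fst fun _ => rfl).smul_left
  rw [integral_sum_apply_fst_add_snd (fun i => hbulk _) (hbulk _),
    Finset.sum_congr rfl fun i _ =>
      congrArg (fun w => w.1 i) (integral_subgraph_fderiv_apply hh hψ hψc _),
    integral_subgraph_fderiv_apply hh hψ hψc,
    ← integral_sum_apply_fst_add_snd (fun i => hbdry _) (hbdry _)]
  congr with x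
  rw [PiLp.inner_apply]
  simp [EuclideanSpace.gradient_apply, mul_comm]
end

section
/- Let f : ℝⁿ → ℝᵐ be measurable, locally bounded, and differentiable at a point x ∈ ℝⁿ. Then the mollification with the symmetric kernel satisfies ε^{−n} ∫_{ℝⁿ} ∏_{i=1}^{n} ψ_δ((x̃_i − x_i)/ε) f(x̃) dx̃ − f(x) = o(ε) as ε ↓ 0, i.e. lim_{ε↓0} ε^{−1} | ε^{−n} ∫_{ℝⁿ} ∏_{i=1}^{n} ψ_δ((x̃_i − x_i)/ε) f(x̃) dx̃ − f(x) | = 0. -/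
open MeasureTheory Topology

/-!
Substituting `y = x + ε z` turns the normalized mollification into `∫ K z • f (x + ε z) dz` with
`K z = ∏ ψ (z i)`, an even kernel of mass one with bounded support. Subtracting `f x` and the
linear term `∫ K z • Df(x) (ε z) dz`, which vanishes because `K` is even, leaves the integral of
`K z` against the first-order Taylor remainder at `ε z`. That remainder is `o(‖ε z‖)` uniformly
for `z` in the bounded support of `K`, hence the whole difference is `o(ε)`.
-/

open Asymptotics Bornology Filter Function Metric Module

theorem integral_eq_zero_of_odd {E F : Type*} [MeasurableSpace E] [AddGroup E] [MeasurableNeg E]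
    [NormedAddCommGroup F] [NormedSpace ℝ F] {μ : Measure E} [μ.IsNegInvariant] {g : E → F}
    (hg : ∀ z, g (-z) = -g z) : ∫ z, g z ∂μ = 0 := by
  have : IsAddTorsionFree F := .of_isTorsionFree ℝ F
  simp_rw [← self_eq_neg, ← integral_neg, ← hg, integral_neg_eq_self]

section SmulKernel

variable {α F : Type*} [NormedAddCommGroup F] [NormedSpace ℝ F] {K : α → ℝ} {g : α → F} {C : ℝ}

theorem norm_smul_le_norm_mul_of_ne_zero (hC : ∀ z, K z ≠ 0 → ‖g z‖ ≤ C) (z : α) :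
    ‖K z • g z‖ ≤ ‖K z‖ * C := by
  by_cases hz : K z = 0
  · simp [hz]
  · rw [norm_smul]
    exact mul_le_mul_of_nonneg_left (hC z hz) (norm_nonneg _)

variable [MeasurableSpace α] {μ : Measure α}

theorem MeasureTheory.Integrable.smul_of_norm_le_on_support (hK : Integrable K μ)
    (hg : AEStronglyMeasurable g μ) (hC : ∀ z, K z ≠ 0 → ‖g z‖ ≤ C) :
    Integrable (fun z => K z • g z) μ :=
  (hK.norm.mul_const C).mono' (hK.aestronglyMeasurable.smul hg)
    (.of_forall (norm_smul_le_norm_mul_of_ne_zero hC))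

theorem norm_integral_smul_le_of_norm_le_on_support (hK : Integrable K μ)
    (hC : ∀ z, K z ≠ 0 → ‖g z‖ ≤ C) :
    ‖∫ z, K z • g z ∂μ‖ ≤ (∫ z, ‖K z‖ ∂μ) * C := by
  rw [← integral_mul_const]
  exact norm_integral_le_of_norm_le (hK.norm.mul_const C)
    (.of_forall (norm_smul_le_norm_mul_of_ne_zero hC))

end SmulKernel

theorem Asymptotics.IsLittleO.eventually_norm_comp_smul_le {E F : Type*} [NormedAddCommGroup E]
    [NormedSpace ℝ E] [NormedAddCommGroup F] {ρ : E → F} (hρ : ρ =o[𝓝 0] fun v => v) {c : ℝ}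
    (hc : 0 < c) (R : ℝ) :
    ∀ᶠ ε in 𝓝 (0 : ℝ), ∀ z ∈ closedBall (0 : E) R, ‖ρ (ε • z)‖ ≤ c * (|ε| * R) := by
  obtain ⟨r, hr, hρr⟩ := Metric.eventually_nhds_iff.1 (hρ.def hc)
  have hsmall : ∀ᶠ ε in 𝓝 (0 : ℝ), |ε| * R < r :=
    ((continuous_abs.mul continuous_const).tendsto' 0 0 (by simp)).eventually (gt_mem_nhds hr)
  filter_upwards [hsmall] with ε hε z hz
  have hεz : ‖ε • z‖ ≤ |ε| * R := by
    rw [norm_smul, Real.norm_eq_abs]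
    exact mul_le_mul_of_nonneg_left (mem_closedBall_zero_iff.1 hz) (abs_nonneg ε)
  calc ‖ρ (ε • z)‖ ≤ c * ‖ε • z‖ := hρr (by simpa using hεz.trans_lt hε)
    _ ≤ c * (|ε| * R) := by gcongr

section Mollifier

variable {E F : Type*} [NormedAddCommGroup E] [NormedSpace ℝ E] [MeasurableSpace E] [BorelSpace E]
  [NormedAddCommGroup F] [NormedSpace ℝ F] {μ : Measure E}

theorem integral_smul_comp_inv_smul_sub [FiniteDimensional ℝ E] [μ.IsAddHaarMeasure]
    (K : E → ℝ) (f : E → F) (x : E) {ε : ℝ} (hε : 0 < ε) :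
    ∫ y, K (ε⁻¹ • (y - x)) • f y ∂μ = ε ^ finrank ℝ E • ∫ z, K z • f (x + ε • z) ∂μ := by
  set g : E → F := fun z => K z • f (x + ε • z)
  calc ∫ y, K (ε⁻¹ • (y - x)) • f y ∂μ = ∫ y, g (ε⁻¹ • (y - x)) ∂μ := by
        simp [g, smul_smul, hε.ne']
    _ = ∫ y, g (ε⁻¹ • y) ∂μ := integral_sub_right_eq_self (fun y => g (ε⁻¹ • y)) x
    _ = ε ^ finrank ℝ E • ∫ z, g z ∂μ := μ.integral_comp_inv_smul_of_nonneg g hε.le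

theorem MeasureTheory.Integrable.smul_clm_of_support_subset [SecondCountableTopology E]
    {K : E → ℝ} (hK : Integrable K μ) {R : ℝ} (hKR : support K ⊆ closedBall 0 R)
    (L : E →L[ℝ] F) : Integrable (fun z => K z • L z) μ :=
  hK.smul_of_norm_le_on_support L.continuous.aestronglyMeasurable (C := ‖L‖ * R) fun z hz =>
    (L.le_opNorm z).trans <|
      mul_le_mul_of_nonneg_left (mem_closedBall_zero_iff.1 (hKR hz)) (norm_nonneg L)

variable [CompleteSpace F]

theorem integral_smul_sub_eq_integral_smul_sub_sub [μ.IsNegInvariant] {K : E → ℝ}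
    (hK_int : Integrable K μ) (hK_even : ∀ z, K (-z) = K z) (hK_mass : ∫ z, K z ∂μ = 1)
    {g : E → F} (v : F) (L : E →L[ℝ] F) (hL : Integrable (fun z => K z • L z) μ)
    (hrem : Integrable (fun z => K z • (g z - v - L z)) μ) :
    ∫ z, K z • g z ∂μ - v = ∫ z, K z • (g z - v - L z) ∂μ := by
  have hL_zero : ∫ z, K z • L z ∂μ = 0 :=
    integral_eq_zero_of_odd fun z => by rw [hK_even, map_neg, smul_neg]
  have hpt : (fun z => K z • g z) = fun z => (K z • (g z - v - L z) + K z • L z) + K z • v := by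
    ext z; simp only [smul_sub]; abel
  have hrem_lin : Integrable (fun z => K z • (g z - v - L z) + K z • L z) μ := hrem.add hL
  rw [hpt, integral_add hrem_lin (hK_int.smul_const v), integral_add hrem hL, integral_smul_const,
    hK_mass, hL_zero, one_smul, add_zero, add_sub_cancel_right]

theorem isLittleO_integral_smul_comp_add_smul_sub [SecondCountableTopology E] [μ.IsNegInvariant]
    {K : E → ℝ} (hK_int : Integrable K μ) (hK_supp : IsBounded (support K))
    (hK_even : ∀ z, K (-z) = K z) (hK_mass : ∫ z, K z ∂μ = 1) {f : E → F} {x : E}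
    (hf_meas : StronglyMeasurable f) (hf : DifferentiableAt ℝ f x) :
    (fun ε : ℝ => ∫ z, K z • f (x + ε • z) ∂μ - f x) =o[𝓝 0] fun ε => ε := by
  obtain ⟨R, hR, hKR⟩ := hK_supp.subset_closedBall_lt 0 0
  set M := ∫ z, ‖K z‖ ∂μ
  have hM : 0 ≤ M := integral_nonneg fun z => norm_nonneg _
  have hρ := hasFDerivAt_iff_isLittleO_nhds_zero.1 hf.hasFDerivAt
  -- it suffices to bound the difference by `c * |M * R * ε|` for every `c > 0`
  refine (isLittleO_iff.2 fun c hc => ?_).trans_isBigO (isBigO_const_mul_self (M * R) _ _)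
  filter_upwards [hρ.eventually_norm_comp_smul_le hc R] with ε hε
  set L := (fderiv ℝ f x).comp (ε • ContinuousLinearMap.id ℝ E)
  have hbound : ∀ z, K z ≠ 0 → ‖f (x + ε • z) - f x - L z‖ ≤ c * (|ε| * R) :=
    fun z hz => hε z (hKR hz)
  have hrem_meas : AEStronglyMeasurable (fun z => f (x + ε • z) - f x - L z) μ :=
    (((hf_meas.comp_measurable (by fun_prop)).sub stronglyMeasurable_const).sub
      L.continuous.stronglyMeasurable).aestronglyMeasurable
  rw [integral_smul_sub_eq_integral_smul_sub_sub hK_int hK_even hK_mass (f x) L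
    (hK_int.smul_clm_of_support_subset hKR L) (hK_int.smul_of_norm_le_on_support hrem_meas hbound)]
  calc _ ≤ M * (c * (|ε| * R)) := norm_integral_smul_le_of_norm_le_on_support hK_int hbound
    _ = c * ‖M * R * ε‖ := by
      rw [norm_mul, norm_mul, Real.norm_of_nonneg hM, Real.norm_of_nonneg hR.le,
        Real.norm_eq_abs]
      ring

end Mollifier

namespace EuclideanSpace

variable {ι : Type*} [Fintype ι] {ψ : ℝ → ℝ}

theorem integrable_prod_comp_apply (hψ : Integrable ψ) :
    Integrable fun z : EuclideanSpace ℝ ι => ∏ i, ψ (z i) :=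
  (volume_preserving_symm_measurableEquiv_toLp ι).integrable_comp_emb
    (MeasurableEquiv.measurableEmbedding _) |>.2 (Integrable.fintype_prod fun _ => hψ)

theorem integral_prod_comp_apply (ψ : ℝ → ℝ) :
    ∫ z : EuclideanSpace ℝ ι, ∏ i, ψ (z i) = (∫ s, ψ s) ^ Fintype.card ι := by
  rw [← integral_fintype_prod_volume_eq_pow,
    ← (volume_preserving_symm_measurableEquiv_toLp ι).integral_comp' fun w => ∏ i, ψ (w i)]
  rfl

theorem isBounded_support_prod_comp_apply (hψ : IsBounded (support ψ)) :
    IsBounded (support fun z : EuclideanSpace ℝ ι => ∏ i, ψ (z i)) := by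
  refine ((PiLp.antilipschitzWith_ofLp 2 _).isBounded_preimage
    (IsBounded.pi fun _ => hψ)).subset fun z hz => ?_
  simpa using fun i => Finset.prod_ne_zero_iff.1 hz i (Finset.mem_univ i)

end EuclideanSpace

theorem stmt_9_general (n m : ℕ)
    (ψ : ℝ → ℝ)
    (hψ_supp : ∀ s : ℝ, s ∉ Set.Ioo (-1 : ℝ) 1 → ψ s = 0)
    (hψ_even : ∀ s : ℝ, ψ (-s) = ψ s)
    (hψ_int : ∫ s : ℝ, ψ s = 1)
    (f : EuclideanSpace ℝ (Fin n) → EuclideanSpace ℝ (Fin m))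
    (hf_meas : Measurable f)
    (x : EuclideanSpace ℝ (Fin n))
    (hf_diff : DifferentiableAt ℝ f x) :
    Filter.Tendsto
      (fun ε : ℝ => ε⁻¹ *
        ‖(ε ^ n)⁻¹ •
            (∫ y : EuclideanSpace ℝ (Fin n), (∏ i : Fin n, ψ ((y i - x i) / ε)) • f y)
          - f x‖)
      (𝓝[>] 0) (𝓝 0) := by
  set K : EuclideanSpace ℝ (Fin n) → ℝ := fun z => ∏ i, ψ (z i)
  -- a non-integrable function would have Bochner integral `0`
  have hψ : Integrable ψ := .of_integral_ne_zero (by simp [hψ_int])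
  have hψ_bdd : IsBounded (support ψ) :=
    isBounded_Ioo (-1 : ℝ) 1 |>.subset fun s hs => by_contra fun h => hs (hψ_supp s h)
  have hK_even : ∀ z, K (-z) = K z := fun z => by simp [K, hψ_even]
  have hK_mass : ∫ z, K z = 1 := by simp [K, EuclideanSpace.integral_prod_comp_apply, hψ_int]
  have hlo : (fun ε : ℝ => (∫ z, K z • f (x + ε • z)) - f x) =o[𝓝 0] fun ε => ε :=
    isLittleO_integral_smul_comp_add_smul_sub (EuclideanSpace.integrable_prod_comp_apply hψ)
      (EuclideanSpace.isBounded_support_prod_comp_apply hψ_bdd) hK_even hK_mass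
      hf_meas.stronglyMeasurable hf_diff
  refine (hlo.mono nhdsWithin_le_nhds).norm_left.tendsto_div_nhds_zero.congr' ?_
  filter_upwards [self_mem_nhdsWithin] with ε (hε : 0 < ε)
  have hkernel : ∀ y : EuclideanSpace ℝ (Fin n),
      ∏ i, ψ ((y i - x i) / ε) = K (ε⁻¹ • (y - x)) := fun y => by
    simp [K, div_eq_inv_mul]
  simp_rw [hkernel, integral_smul_comp_inv_smul_sub K f x hε, finrank_euclideanSpace_fin,
    smul_smul, inv_mul_cancel₀ (pow_ne_zero n hε.ne'), one_smul, div_eq_inv_mul]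

/-- **Mollification with a symmetric kernel reproduces values to order `o(ε)` at
differentiability points (used in Lemmas 3.14/3.15).**
Fix `δ ∈ (0,1/2)` and an even kernel `ψ_δ ∈ C¹_c((−1,1))` with `ψ_δ ≡ 1` on `[−1+δ,1−δ]`
and `∫ψ_δ = 1`. If `f : ℝⁿ → ℝᵐ` is measurable, locally bounded and differentiable at `x`,
then `ε^{−n} ∫ (∏ᵢ ψ_δ((x̃ᵢ−xᵢ)/ε)) f(x̃) dx̃ − f(x) = o(ε)` as `ε ↓ 0`. -/
theorem stmt_9 (n m : ℕ) (δ : ℝ) (hδ : δ ∈ Set.Ioo (0 : ℝ) (1 / 2))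
    (ψ : ℝ → ℝ) (hψ_smooth : ContDiff ℝ 1 ψ)
    (hψ_supp : ∀ s : ℝ, s ∉ Set.Ioo (-1 : ℝ) 1 → ψ s = 0)
    (hψ_one : ∀ s ∈ Set.Icc (-1 + δ) (1 - δ), ψ s = 1)
    (hψ_even : ∀ s : ℝ, ψ (-s) = ψ s)
    (hψ_int : ∫ s : ℝ, ψ s = 1)
    (f : EuclideanSpace ℝ (Fin n) → EuclideanSpace ℝ (Fin m))
    (hf_meas : Measurable f)
    (hf_locbdd : ∀ z : EuclideanSpace ℝ (Fin n), ∃ r > (0 : ℝ), ∃ C : ℝ,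
      ∀ y ∈ Metric.ball z r, ‖f y‖ ≤ C)
    (x : EuclideanSpace ℝ (Fin n))
    (hf_diff : DifferentiableAt ℝ f x) :
    Filter.Tendsto
      (fun ε : ℝ => ε⁻¹ *
        ‖(ε ^ n)⁻¹ •
            (∫ y : EuclideanSpace ℝ (Fin n), (∏ i : Fin n, ψ ((y i - x i) / ε)) • f y)
          - f x‖)
      (𝓝[>] 0) (𝓝 0) :=
  stmt_9_general n m ψ hψ_supp hψ_even hψ_int f hf_meas x hf_diff
end

section
/- Let t₀ > 0, d ≥ 1, and let u : [0, t₀] × ℝ^d → ℝ^d be continuous and bounded, and Lipschitz continuous in the space variable uniformly in t. Let X : [0, t₀] × ℝ^d → ℝ^d be continuous with X(0, z) = z and ∂_t X(t, z) = u(t, X(t, z)) for all t ∈ [0, t₀] and z ∈ ℝ^d. Let μ₀ be a locally finite Borel measure on ℝ^d, and define μ_t := (X(t, ·))_* μ₀ as the pushforward measure. Then μ is a distributional solution of the transport equation ∂_t μ + div(u μ) = 0 with initial datum μ₀: for every continuously differentiable φ : [0, t₀) × ℝ^d → ℝ with compact support, ∫₀^{t₀} ∫_{ℝ^d} ( ∂_t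 φ(t, z) + u(t, z)·∇_z φ(t, z) ) dμ_t(z) dt + ∫_{ℝ^d} φ(0, z) dμ₀(z) = 0. -/
open MeasureTheory
open scoped RealInnerProductSpace

/-!
Along a trajectory `t ↦ (t, X t z)` the integrand `∂ₜφ + u·∇_zφ` is the time derivative of
`t ↦ φ (t, X t z)`, so its integral over `(0, t₀]` is `φ (t₀, X t₀ z) - φ (0, z) = -φ (0, z)`.
Undoing the pushforward by the change of variables `∫ g d(X t)_* μ₀ = ∫ g ∘ X t dμ₀` and
exchanging the two integrals gives the claim. Fubini applies because the integrand is bounded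
and, trajectories moving at speed at most `C`, vanishes unless `z` lies within `C t₀` of the
spatial projection of the support of `Dφ`, a compact set of finite `μ₀`-measure.
-/

open Set

section Gradient

variable {E : Type*} [NormedAddCommGroup E] [InnerProductSpace ℝ E] [CompleteSpace E]

theorem deriv_add_inner_gradient_eq_fderiv {φ : ℝ × E → ℝ} {t : ℝ} {z : E}
    (hφ : DifferentiableAt ℝ φ (t, z)) (v : E) :
    deriv (fun s => φ (s, z)) t + ⟪v, gradient (fun w => φ (t, w)) z⟫
      = fderiv ℝ φ (t, z) (1, v) := by
  have h_time : HasDerivAt (fun s => φ (s, z)) (fderiv ℝ φ (t, z) (1, 0)) t :=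
    hφ.hasFDerivAt.comp_hasDerivAt t ((hasDerivAt_id t).prodMk (hasDerivAt_const t z))
  have h_space : HasFDerivAt (fun w => φ (t, w))
      ((fderiv ℝ φ (t, z)).comp (ContinuousLinearMap.inr ℝ ℝ E)) z :=
    hφ.hasFDerivAt.comp z (hasFDerivAt_prodMk_right t z)
  rw [h_time.deriv, real_inner_comm, gradient, ← InnerProductSpace.toDual_apply_apply,
    LinearIsometryEquiv.apply_symm_apply, h_space.fderiv, ContinuousLinearMap.comp_apply,
    ContinuousLinearMap.inr_apply, ← map_add, Prod.mk_add_mk, add_zero, zero_add]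

end Gradient

theorem integrable_restrict_prod_of_norm_le_indicator {α β G : Type*} [MeasurableSpace α]
    [MeasurableSpace β] [NormedAddCommGroup G] {ν : Measure α} {μ : Measure β} [SFinite μ]
    {s : Set α} (hs : MeasurableSet s) [IsFiniteMeasure (ν.restrict s)] {K : Set β}
    (hK : MeasurableSet K) (hμK : μ K ≠ ⊤) {f : α × β → G}
    (hf : AEStronglyMeasurable f ((ν.restrict s).prod μ)) (M : ℝ)
    (hfK : ∀ t ∈ s, ∀ z, ‖f (t, z)‖ ≤ K.indicator (fun _ => M) z) :
    Integrable f ((ν.restrict s).prod μ) := by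
  have h_dom : Integrable (K.indicator fun _ => M) μ :=
    (integrable_indicator_iff hK).2 (integrableOn_const hμK)
  refine (h_dom.comp_snd (ν.restrict s)).mono' hf ?_
  filter_upwards [Measure.quasiMeasurePreserving_fst.ae (ae_restrict_mem hs)] with p hp
  exact hfK p.1 hp p.2

section Flow

variable {E : Type*} [NormedAddCommGroup E] [NormedSpace ℝ E]

theorem integral_fderiv_along_curve {F : Type*} [NormedAddCommGroup F] [NormedSpace ℝ F]
    [CompleteSpace F] {φ : ℝ × E → F} (hφ : ContDiff ℝ 1 φ)
    {γ v : ℝ → E} {a b : ℝ} (hab : a ≤ b)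
    (hγ : ∀ t ∈ Icc a b, HasDerivWithinAt γ (v t) (Icc a b) t) (hv : ContinuousOn v (Icc a b)) :
    ∫ t in Ioc a b, fderiv ℝ φ (t, γ t) (1, v t) = φ (b, γ b) - φ (a, γ a) := by
  have hγc : ContinuousOn γ (Icc a b) := fun t ht => (hγ t ht).continuousWithinAt
  have h_deriv : ∀ t ∈ Icc a b, HasDerivWithinAt (fun s => φ (s, γ s))
      (fderiv ℝ φ (t, γ t) (1, v t)) (Icc a b) t := fun t ht =>
    ((hφ.differentiable one_ne_zero) (t, γ t)).hasFDerivAt.comp_hasDerivWithinAt t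
      ((hasDerivWithinAt_id t _).prodMk (hγ t ht))
  have h_cont : ContinuousOn (fun t => fderiv ℝ φ (t, γ t) (1, v t)) (Icc a b) :=
    ((hφ.continuous_fderiv one_ne_zero).comp_continuousOn
      (continuousOn_id.prodMk hγc)).clm_apply (continuousOn_const.prodMk hv)
  rw [← intervalIntegral.integral_of_le hab]
  exact intervalIntegral.integral_eq_sub_of_hasDeriv_right_of_le hab
    (hφ.continuous.comp_continuousOn (continuousOn_id.prodMk hγc))
    (fun t ht => ((h_deriv t (Ioo_subset_Icc_self ht)).hasDerivAt
      (Icc_mem_nhds ht.1 ht.2)).hasDerivWithinAt) (h_cont.intervalIntegrable_of_Icc hab)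

variable {t₀ C : ℝ} {u X : ℝ → E → E}

theorem mem_cthickening_of_apply_flow_ne_zero {G : Type*} [Zero G] {g : ℝ × E → G}
    (hC : ∀ t ∈ Icc 0 t₀, ∀ z, ‖u t z‖ ≤ C) (hX0 : ∀ z, X 0 z = z)
    (hX_ode : ∀ z, ∀ t ∈ Icc 0 t₀, HasDerivWithinAt (fun s => X s z) (u t (X t z)) (Icc 0 t₀) t)
    {t : ℝ} (ht : t ∈ Icc 0 t₀) {z : E} (hg : g (t, X t z) ≠ 0) :
    z ∈ Metric.cthickening (C * t₀) (Prod.snd '' tsupport g) := by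
  have h_disp : ‖X t z - X 0 z‖ ≤ C * ‖t - 0‖ :=
    (convex_Icc 0 t₀).norm_image_sub_le_of_norm_hasDerivWithin_le (hX_ode z)
      (fun s hs => hC s hs _) (left_mem_Icc.2 (ht.1.trans ht.2)) ht
  have hC0 : 0 ≤ C := (norm_nonneg _).trans (hC t ht z)
  refine Metric.mem_cthickening_of_dist_le z (X t z) _ _ ⟨_, subset_tsupport g hg, rfl⟩ ?_
  rw [hX0, sub_zero, Real.norm_of_nonneg ht.1] at h_disp
  rw [dist_comm, dist_eq_norm]
  exact h_disp.trans (mul_le_mul_of_nonneg_left ht.2 hC0)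

variable [ProperSpace E] [MeasurableSpace E] [BorelSpace E]

theorem integrable_fderiv_along_flow {φ : ℝ × E → ℝ} (hφ : ContDiff ℝ 1 φ)
    (hφc : HasCompactSupport φ)
    (hu_cont : ContinuousOn (fun p : ℝ × E => u p.1 p.2) (Icc 0 t₀ ×ˢ univ))
    (hC : ∀ t ∈ Icc 0 t₀, ∀ z, ‖u t z‖ ≤ C)
    (hX_cont : ContinuousOn (fun p : ℝ × E => X p.1 p.2) (Icc 0 t₀ ×ˢ univ))
    (hX0 : ∀ z, X 0 z = z)
    (hX_ode : ∀ z, ∀ t ∈ Icc 0 t₀, HasDerivWithinAt (fun s => X s z) (u t (X t z)) (Icc 0 t₀) t)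
    (μ₀ : Measure E) [IsLocallyFiniteMeasure μ₀] :
    Integrable (fun p : ℝ × E => fderiv ℝ φ (p.1, X p.1 p.2) (1, u p.1 (X p.1 p.2)))
      ((volume.restrict (Ioc 0 t₀)).prod μ₀) := by
  set Dφ := fderiv ℝ φ
  have hDφ : Continuous Dφ := hφ.continuous_fderiv one_ne_zero
  obtain ⟨M, hM⟩ : ∃ M, ∀ p, ‖Dφ p‖ ≤ M :=
    hDφ.bounded_above_of_compact_support (hφc.fderiv (𝕜 := ℝ))
  have hM0 : 0 ≤ M := (norm_nonneg _).trans (hM 0)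
  have hK : IsCompact (Metric.cthickening (C * t₀) (Prod.snd '' tsupport Dφ)) :=
    ((hφc.fderiv (𝕜 := ℝ)).image continuous_snd).cthickening
  have h_flow : ContinuousOn (fun p : ℝ × E => (p.1, X p.1 p.2)) (Icc 0 t₀ ×ˢ univ) :=
    continuousOn_fst.prodMk hX_cont
  have h_meas : AEStronglyMeasurable
      (fun p : ℝ × E => Dφ (p.1, X p.1 p.2) (1, u p.1 (X p.1 p.2)))
      ((volume.restrict (Ioc 0 t₀)).prod μ₀) := by
    rw [Measure.restrict_prod_eq_prod_univ]
    exact (((hDφ.comp_continuousOn h_flow).clm_apply (continuousOn_const.prodMk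
      (hu_cont.comp h_flow fun p hp => ⟨hp.1, trivial⟩))).mono
      (prod_mono Ioc_subset_Icc_self subset_rfl)).aestronglyMeasurable
      (measurableSet_Ioc.prod MeasurableSet.univ)
  refine integrable_restrict_prod_of_norm_le_indicator measurableSet_Ioc hK.measurableSet
    hK.measure_lt_top.ne h_meas (M * (1 + C)) fun t ht z => ?_
  have ht' := Ioc_subset_Icc_self ht
  have hC0 : 0 ≤ C := (norm_nonneg _).trans (hC t ht' z)
  by_cases hz : Dφ (t, X t z) = 0
  · simp only [hz, zero_apply, norm_zero]
    exact indicator_nonneg (fun _ _ => by positivity) z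
  rw [indicator_of_mem (mem_cthickening_of_apply_flow_ne_zero hC hX0 hX_ode ht' hz)]
  calc ‖Dφ (t, X t z) (1, u t (X t z))‖ ≤ ‖Dφ (t, X t z)‖ * ‖((1 : ℝ), u t (X t z))‖ :=
        (Dφ _).le_opNorm _
    _ ≤ M * (1 + C) := by
        refine mul_le_mul (hM _) ?_ (norm_nonneg _) hM0
        rw [Prod.norm_def, norm_one]
        exact max_le (by linarith) (by linarith [hC t ht' (X t z)])

end Flow

theorem stmt_13_general (d : ℕ) (t₀ : ℝ) (ht₀ : 0 < t₀)
    (u : ℝ → EuclideanSpace ℝ (Fin d) → EuclideanSpace ℝ (Fin d))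
    (hu_cont : ContinuousOn (fun p : ℝ × EuclideanSpace ℝ (Fin d) => u p.1 p.2)
      (Set.Icc 0 t₀ ×ˢ Set.univ))
    (hu_bdd : ∃ C : ℝ, ∀ t ∈ Set.Icc (0 : ℝ) t₀, ∀ z, ‖u t z‖ ≤ C)
    (X : ℝ → EuclideanSpace ℝ (Fin d) → EuclideanSpace ℝ (Fin d))
    (hX_cont : ContinuousOn (fun p : ℝ × EuclideanSpace ℝ (Fin d) => X p.1 p.2)
      (Set.Icc 0 t₀ ×ˢ Set.univ))
    (hX0 : ∀ z, X 0 z = z)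
    (hX_ode : ∀ z, ∀ t ∈ Set.Icc (0 : ℝ) t₀,
      HasDerivWithinAt (fun s => X s z) (u t (X t z)) (Set.Icc 0 t₀) t)
    (μ₀ : Measure (EuclideanSpace ℝ (Fin d))) [IsLocallyFiniteMeasure μ₀]
    (φ : ℝ × EuclideanSpace ℝ (Fin d) → ℝ)
    (hφ : ContDiff ℝ 1 φ) (hφc : HasCompactSupport φ)
    (hφt : ∀ z, ∀ t, t₀ ≤ t → φ (t, z) = 0) :
    (∫ t in Set.Ioc (0 : ℝ) t₀,
        ∫ z, (deriv (fun s => φ (s, z)) t + ⟪u t z, gradient (fun w => φ (t, w)) z⟫)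
          ∂(Measure.map (X t) μ₀))
      + (∫ z, φ (0, z) ∂μ₀) = 0 := by
  obtain ⟨C, hC⟩ := hu_bdd
  have h_push : ∀ t ∈ Ioc 0 t₀,
      ∫ z, (deriv (fun s => φ (s, z)) t + ⟪u t z, gradient (fun w => φ (t, w)) z⟫)
          ∂(Measure.map (X t) μ₀)
        = ∫ z, fderiv ℝ φ (t, X t z) (1, u t (X t z)) ∂μ₀ := by
    intro t ht
    have hXt := continuousOn_univ.1 (hX_cont.uncurry_left t (Ioc_subset_Icc_self ht))
    have hut := continuousOn_univ.1 (hu_cont.uncurry_left t (Ioc_subset_Icc_self ht))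
    simp only [deriv_add_inner_gradient_eq_fderiv (hφ.differentiable one_ne_zero _)]
    exact integral_map hXt.aemeasurable (((hφ.continuous_fderiv one_ne_zero).comp
      (Continuous.prodMk_right t)).clm_apply (continuous_const.prodMk hut)).aestronglyMeasurable
  have h_FTC : ∀ z, ∫ t in Ioc 0 t₀, fderiv ℝ φ (t, X t z) (1, u t (X t z)) = -φ (0, z) := by
    intro z
    have hXz : ContinuousOn (fun t => X t z) (Icc 0 t₀) :=
      fun t ht => (hX_ode z t ht).continuousWithinAt
    rw [integral_fderiv_along_curve hφ ht₀.le (hX_ode z)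
      (hu_cont.comp (continuousOn_id.prodMk hXz) fun t ht => ⟨ht, trivial⟩),
      hφt _ _ le_rfl, hX0, zero_sub]
  rw [setIntegral_congr_fun measurableSet_Ioc h_push,
    integral_integral_swap (integrable_fderiv_along_flow hφ hφc hu_cont hC hX_cont hX0 hX_ode μ₀)]
  simp only [h_FTC, integral_neg, neg_add_cancel]

/-- **Proposition 3.11 (`prop:MV`), existence part for `b = 0`:**
the pushforward of a locally finite measure along the flow of a bounded, continuous vector
field `u` that is Lipschitz in space uniformly in time is a distributional solution of the
transport equation `∂_t μ + div(u μ) = 0`, `μ(0) = μ₀`: for every `C¹` compactly supported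
test function `φ` on `[0,t₀) × ℝ^d`,
`∫₀^{t₀} ∫ (∂_t φ + u·∇_z φ) dμ_t dt + ∫ φ(0,·) dμ₀ = 0`. -/
theorem stmt_13 (d : ℕ) (hd : 1 ≤ d) (t₀ : ℝ) (ht₀ : 0 < t₀)
    (u : ℝ → EuclideanSpace ℝ (Fin d) → EuclideanSpace ℝ (Fin d))
    (hu_cont : ContinuousOn (fun p : ℝ × EuclideanSpace ℝ (Fin d) => u p.1 p.2)
      (Set.Icc 0 t₀ ×ˢ Set.univ))
    (hu_bdd : ∃ C : ℝ, ∀ t ∈ Set.Icc (0 : ℝ) t₀, ∀ z, ‖u t z‖ ≤ C)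
    (hu_lip : ∃ L : NNReal, ∀ t ∈ Set.Icc (0 : ℝ) t₀, LipschitzWith L (u t))
    (X : ℝ → EuclideanSpace ℝ (Fin d) → EuclideanSpace ℝ (Fin d))
    (hX_cont : ContinuousOn (fun p : ℝ × EuclideanSpace ℝ (Fin d) => X p.1 p.2)
      (Set.Icc 0 t₀ ×ˢ Set.univ))
    (hX0 : ∀ z, X 0 z = z)
    (hX_ode : ∀ z, ∀ t ∈ Set.Icc (0 : ℝ) t₀,
      HasDerivWithinAt (fun s => X s z) (u t (X t z)) (Set.Icc 0 t₀) t)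
    (μ₀ : Measure (EuclideanSpace ℝ (Fin d))) [IsLocallyFiniteMeasure μ₀]
    (φ : ℝ × EuclideanSpace ℝ (Fin d) → ℝ)
    (hφ : ContDiff ℝ 1 φ) (hφc : HasCompactSupport φ)
    (hφt : ∀ z, ∀ t, t₀ ≤ t → φ (t, z) = 0) :
    (∫ t in Set.Ioc (0 : ℝ) t₀,
        ∫ z, (deriv (fun s => φ (s, z)) t + ⟪u t z, gradient (fun w => φ (t, w)) z⟫)
          ∂(Measure.map (X t) μ₀))
      + (∫ z, φ (0, z) ∂μ₀) = 0 :=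
  stmt_13_general d t₀ ht₀ u hu_cont hu_bdd X hX_cont hX0 hX_ode μ₀ φ hφ hφc hφt
end

section
/- Let t₀ > 0, 1 ≤ p < ∞, and let v ∈ L_p((0, t₀) × ℝ^{n+1}). Then for every η > 0 there exists ρ > 0 such that for every continuous function g : [0, t₀] × ℝⁿ → ℝ with sup_{(t,x)} |g(t,x)| < ρ one has ∫₀^{t₀} ‖ v(t, ·, · − g(t, ·)) − v(t, ·, ·) ‖_{L_p(ℝ^{n+1})}^p dt ≤ η, where v(t, x, y − g(t,x)) denotes the composition of v(t, ·, ·) with the shear map (x, y) ↦ (x, y − g(t, x)). -/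
open MeasureTheory
open scoped ENNReal

/-!
Approximate `v` in `L_p` by a continuous compactly supported `w`. The shear `S` preserves the
measure, so `‖(v - w) ∘ S‖_p = ‖v - w‖_p`, while `w ∘ S - w` is uniformly small (`w` is uniformly
continuous and `S` moves points by `|g|`) and vanishes off `tsupport w ∪ S⁻¹' tsupport w`, a set of
measure at most twice that of `tsupport w`. Tonelli identifies the time integral of the `p`-th
powers of the sliced norms with the `p`-th power of the norm on the product.
-/

section Shear

variable {T X G : Type*} [MeasurableSpace T] [MeasurableSpace X] [MeasurableSpace G]
  [AddGroup G] [MeasurableAdd G] [MeasurableSub₂ G]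
  (μt : Measure T) [SFinite μt] (μ : Measure X) [SFinite μ] (ν : Measure G) [SFinite ν]
  [ν.IsAddRightInvariant]

theorem measurePreserving_shear_s16 {h : X → G} (hh : Measurable h) :
    MeasurePreserving (fun q : X × G => (q.1, q.2 - h q.1)) (μ.prod ν) (μ.prod ν) :=
  (MeasurePreserving.id μ).skew_product (measurable_snd.sub (hh.comp measurable_fst))
    (ae_of_all _ fun x => (measurePreserving_sub_right ν (h x)).map_eq)

theorem measurePreserving_shear_param {g : T → X → G} (hg : Measurable (Function.uncurry g)) :
    MeasurePreserving (fun z : T × X × G => (z.1, (z.2.1, z.2.2 - g z.1 z.2.1)))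
      (μt.prod (μ.prod ν)) (μt.prod (μ.prod ν)) :=
  (MeasurePreserving.id μt).skew_product (g := fun t (q : X × G) => (q.1, q.2 - g t q.1))
    (measurable_snd.fst.prodMk
      (measurable_snd.snd.sub (hg.comp (measurable_fst.prodMk measurable_snd.fst))))
    (ae_of_all _ fun _ => (measurePreserving_shear_s16 μ ν (hg.comp measurable_prodMk_left)).map_eq)

end Shear

theorem eLpNorm_ofReal_rpow_eq_lintegral {α E : Type*} [MeasurableSpace α] [NormedAddCommGroup E]
    (μ : Measure α) (f : α → E) {p : ℝ} (hp : 0 < p) :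
    eLpNorm f (ENNReal.ofReal p) μ ^ p = ∫⁻ x, ‖f x‖ₑ ^ p ∂μ := by
  have h := eLpNorm_nnreal_pow_eq_lintegral (μ := μ) (f := f) (Real.toNNReal_pos.2 hp).ne'
  rwa [Real.coe_toNNReal _ hp.le] at h

theorem lintegral_eLpNorm_rpow_prod {T X E : Type*} [MeasurableSpace T] [MeasurableSpace X]
    [NormedAddCommGroup E] {μ : Measure T} {ν : Measure X} [SFinite ν] {F : T × X → E}
    (hF : AEStronglyMeasurable F (μ.prod ν)) {p : ℝ} (hp : 0 < p) :
    ∫⁻ t, eLpNorm (fun x => F (t, x)) (ENNReal.ofReal p) ν ^ p ∂μ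
      = eLpNorm F (ENNReal.ofReal p) (μ.prod ν) ^ p := by
  simp only [eLpNorm_ofReal_rpow_eq_lintegral _ _ hp]
  exact (lintegral_prod _ (hF.enorm.pow_const p)).symm

section SmallMeasurePreserving

variable {α E : Type*} [PseudoMetricSpace α] [MeasurableSpace α]
  [NormedAddCommGroup E] {μ : Measure α}

theorem HasCompactSupport.exists_eLpNorm_comp_sub_le [OpensMeasurableSpace α]
    [IsFiniteMeasureOnCompacts μ] {w : α → E}
    (hw : HasCompactSupport w) (hwc : Continuous w) (p : ℝ≥0∞) {ε : ℝ≥0∞} (hε : ε ≠ 0) :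
    ∃ δ > 0, ∀ S : α → α, MeasurePreserving S μ μ → (∀ z, dist (S z) z < δ) →
      eLpNorm (fun z => w (S z) - w z) p μ ≤ ε := by
  set K := tsupport w
  have hK : MeasurableSet K := (isClosed_tsupport w).measurableSet
  have hKfin : (μ K + μ K) ^ p.toReal⁻¹ ≠ ∞ :=
    ENNReal.rpow_ne_top_of_nonneg (by positivity)
      (ENNReal.add_ne_top.2 ⟨hw.measure_lt_top.ne, hw.measure_lt_top.ne⟩)
  obtain ⟨c, hc, hcε⟩ := ENNReal.exists_nnreal_pos_mul_lt hKfin hε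
  obtain ⟨δ, hδ, hwδ⟩ := Metric.uniformContinuous_iff.1
    (hw.uniformContinuous_of_continuous hwc) c hc
  refine ⟨δ, hδ, fun S hS hSδ => ?_⟩
  have hsupp : (fun z => w (S z) - w z).support ⊆ K ∪ S ⁻¹' K := by
    intro z hz
    by_contra hzK
    simp only [Set.mem_union, Set.mem_preimage, not_or] at hzK
    simp [image_eq_zero_of_notMem_tsupport hzK.1, image_eq_zero_of_notMem_tsupport hzK.2] at hz
  have hmeas : μ (K ∪ S ⁻¹' K) ≤ μ K + μ K := by
    calc μ (K ∪ S ⁻¹' K) ≤ μ K + μ (S ⁻¹' K) := measure_union_le _ _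
      _ = μ K + μ K := by rw [hS.measure_preimage hK.nullMeasurableSet]
  calc eLpNorm (fun z => w (S z) - w z) p μ
      = eLpNorm (fun z => w (S z) - w z) p (μ.restrict (K ∪ S ⁻¹' K)) :=
        (eLpNorm_restrict_eq_of_support_subset hsupp).symm
    _ ≤ μ.restrict (K ∪ S ⁻¹' K) Set.univ ^ p.toReal⁻¹ * ENNReal.ofReal c :=
        eLpNorm_le_of_ae_bound (ae_of_all _ fun z => by
          rw [← dist_eq_norm]; exact (hwδ (hSδ z)).le)
    _ ≤ (μ K + μ K) ^ p.toReal⁻¹ * c := by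
        rw [Measure.restrict_apply_univ, ENNReal.ofReal_coe_nnreal]
        gcongr
    _ ≤ ε := by rw [mul_comm]; exact hcε.le

theorem MemLp.exists_eLpNorm_comp_sub_le [BorelSpace α] [WeaklyLocallyCompactSpace α] [μ.Regular]
    [NormedSpace ℝ E] {p : ℝ≥0∞} (hp1 : 1 ≤ p) (hp : p ≠ ∞) {f : α → E} (hf : MemLp f p μ)
    {ε : ℝ≥0∞} (hε : ε ≠ 0) :
    ∃ δ > 0, ∀ S : α → α, MeasurePreserving S μ μ → (∀ z, dist (S z) z < δ) →
      eLpNorm (fun z => f (S z) - f z) p μ ≤ ε := by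
  have hε3 : ε / 3 ≠ 0 := by simpa using hε
  obtain ⟨w, hw, hfw, hwc, hwp⟩ := hf.exists_hasCompactSupport_eLpNorm_sub_le hp hε3
  obtain ⟨δ, hδ, hwS⟩ := hw.exists_eLpNorm_comp_sub_le (μ := μ) hwc p hε3
  refine ⟨δ, hδ, fun S hS hSδ => ?_⟩
  have hfw_meas : AEStronglyMeasurable (f - w) μ := (hf.sub hwp).1
  have hfwS_meas : AEStronglyMeasurable ((f - w) ∘ S) μ :=
    hfw_meas.comp_measurePreserving hS
  have hwS_meas : AEStronglyMeasurable (fun z => w (S z) - w z) μ :=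
    (hwp.1.comp_measurePreserving hS).sub hwp.1
  have hsplit : (fun z => f (S z) - f z) = (f - w) ∘ S + (fun z => w (S z) - w z) - (f - w) := by
    ext z; simp only [Pi.add_apply, Pi.sub_apply, Function.comp_apply]; abel
  calc eLpNorm (fun z => f (S z) - f z) p μ
      ≤ eLpNorm ((f - w) ∘ S) p μ + eLpNorm (fun z => w (S z) - w z) p μ
          + eLpNorm (f - w) p μ := by
        rw [hsplit]
        refine (eLpNorm_sub_le (hfwS_meas.add hwS_meas) hfw_meas hp1).trans ?_
        gcongr
        exact eLpNorm_add_le hfwS_meas hwS_meas hp1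
    _ ≤ ε / 3 + ε / 3 + ε / 3 := by
        rw [eLpNorm_comp_measurePreserving hfw_meas hS]
        exact add_le_add (add_le_add hfw (hwS S hS hSδ)) hfw
    _ = ε := ENNReal.add_thirds ε

end SmallMeasurePreserving

theorem stmt_16_general (n : ℕ) (t₀ : ℝ) (p : ℝ) (hp : 1 ≤ p)
    (v : ℝ → EuclideanSpace ℝ (Fin n) × ℝ → ℝ)
    (hv_mem : MemLp (fun q : ℝ × (EuclideanSpace ℝ (Fin n) × ℝ) => v q.1 q.2)
      (ENNReal.ofReal p)
      ((volume.restrict (Set.Ioo (0 : ℝ) t₀)).prod volume)) :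
    ∀ η > (0 : ℝ), ∃ ρ > (0 : ℝ), ∀ g : ℝ → EuclideanSpace ℝ (Fin n) → ℝ,
      Continuous (fun q : ℝ × EuclideanSpace ℝ (Fin n) => g q.1 q.2) →
      (∀ t x, |g t x| < ρ) →
      (∫⁻ t in Set.Ioo (0 : ℝ) t₀,
          (eLpNorm (fun q : EuclideanSpace ℝ (Fin n) × ℝ =>
              v t (q.1, q.2 - g t q.1) - v t q) (ENNReal.ofReal p) volume) ^ p)
        ≤ ENNReal.ofReal η := by
  intro η hη
  have hp0 : 0 < p := by linarith
  set μ : Measure (ℝ × EuclideanSpace ℝ (Fin n) × ℝ) :=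
    (volume.restrict (Set.Ioo (0 : ℝ) t₀)).prod volume
  have : μ.Regular := Measure.Regular.of_sigmaCompactSpace_of_isLocallyFiniteMeasure _
  obtain ⟨ρ, hρ, hsmall⟩ := MemLp.exists_eLpNorm_comp_sub_le (ENNReal.one_le_ofReal.2 hp)
    ENNReal.ofReal_ne_top hv_mem (ε := ENNReal.ofReal η ^ p⁻¹) (by simp [hη, hp0])
  refine ⟨ρ, hρ, fun g hg hgρ => ?_⟩
  set S := fun z : ℝ × EuclideanSpace ℝ (Fin n) × ℝ => (z.1, (z.2.1, z.2.2 - g z.1 z.2.1))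
  have hS : MeasurePreserving S μ μ :=
    measurePreserving_shear_param (volume.restrict _) volume volume hg.measurable
  have hSρ : ∀ z, dist (S z) z < ρ := fun z => by
    simpa [S, Prod.dist_eq, Real.dist_eq] using hgρ z.1 z.2.1
  calc _ = eLpNorm (fun z => v (S z).1 (S z).2 - v z.1 z.2) (ENNReal.ofReal p) μ ^ p :=
        lintegral_eLpNorm_rpow_prod ((hv_mem.1.comp_measurePreserving hS).sub hv_mem.1) hp0
    _ ≤ (ENNReal.ofReal η ^ p⁻¹) ^ p := by gcongr; exact hsmall S hS hSρ
    _ = ENNReal.ofReal η := by rw [← ENNReal.rpow_mul, inv_mul_cancel₀ hp0.ne', ENNReal.rpow_one]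

/-- **Continuity of composition with small shears in `L_p((0,t₀) × ℝ^{n+1})`
(property (3.21), `Lpshift`).** Let `v ∈ L_p((0,t₀) × ℝ^{n+1})`, `1 ≤ p < ∞`. Then for every
`η > 0` there is `ρ > 0` such that for every continuous `g : [0,t₀] × ℝⁿ → ℝ` with
`sup |g| < ρ` one has `∫₀^{t₀} ‖v(t,·,· − g(t,·)) − v(t,·,·)‖_{L_p}^p dt ≤ η`. -/
theorem stmt_16 (n : ℕ) (t₀ : ℝ) (ht₀ : 0 < t₀) (p : ℝ) (hp : 1 ≤ p)
    (v : ℝ → EuclideanSpace ℝ (Fin n) × ℝ → ℝ)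
    (hv_mem : MemLp (fun q : ℝ × (EuclideanSpace ℝ (Fin n) × ℝ) => v q.1 q.2)
      (ENNReal.ofReal p)
      ((volume.restrict (Set.Ioo (0 : ℝ) t₀)).prod volume)) :
    ∀ η > (0 : ℝ), ∃ ρ > (0 : ℝ), ∀ g : ℝ → EuclideanSpace ℝ (Fin n) → ℝ,
      Continuous (fun q : ℝ × EuclideanSpace ℝ (Fin n) => g q.1 q.2) →
      (∀ t x, |g t x| < ρ) →
      (∫⁻ t in Set.Ioo (0 : ℝ) t₀,
          (eLpNorm (fun q : EuclideanSpace ℝ (Fin n) × ℝ =>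
              v t (q.1, q.2 - g t q.1) - v t q) (ENNReal.ofReal p) volume) ^ p)
        ≤ ENNReal.ofReal η :=
  stmt_16_general n t₀ p hp v hv_mem
end
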